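/- arXiv:1212.5288 — 2 statements merged into one kernel-verified Lean document; each statement's English description precedes it below -/
import Mathlib

section
/- If a matrix Θ satisfies the restricted isometry property of order 2k with constant δ₂ₖ, and 2k ≤ k₁ + k₂ with k₁, k₂ ≤ k each positive, then for any two vectors u, v with disjoint supports, ‖u‖₀ ≤ k and ‖v‖₀ ≤ k, we have |⟨Θu, Θv⟩| ≤ δ₂ₖ ‖u‖₂ ‖v‖₂. -/
open Matrix

/-- Euclidean norm of a vector. -/
noncomputable def enorm₂ {m : ℕ} (v : Fin m → ℝ) : ℝ := Real.sqrt (∑ i, v i ^ 2)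

/-- The restricted isometry property of order `s` with constant `δ`. -/
def RIP {m n : ℕ} (Θ : Matrix (Fin m) (Fin n) ℝ) (s : ℕ) (δ : ℝ) : Prop :=
  ∀ x : Fin n → ℝ, Set.ncard {i | x i ≠ 0} ≤ s →
    (1 - δ) * (∑ i, x i ^ 2) ≤ (∑ i, (Θ.mulVec x) i ^ 2) ∧
      (∑ i, (Θ.mulVec x) i ^ 2) ≤ (1 + δ) * (∑ i, x i ^ 2)

/-!
Polarization: for orthogonal `x`, `y` the vectors `x + y` and `x - y` have the same squared
norm `‖x‖² + ‖y‖²`, so `4 ⟨Θx, Θy⟩ = ‖Θ(x + y)‖² - ‖Θ(x - y)‖² ≤ 2δ (‖x‖² + ‖y‖²)` by the two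
RIP bounds.
Applied to `‖v‖ u` and `± ‖u‖ v`, which are orthogonal and `2k`-sparse when `u`, `v` are
`k`-sparse with disjoint supports, this gives `|⟨Θu, Θv⟩| ≤ δ ‖u‖ ‖v‖`.
-/

open Function

lemma sum_sq_eq_dotProduct {ι R : Type*} [Fintype ι] [Semiring R] (x : ι → R) :
    ∑ i, x i ^ 2 = x ⬝ᵥ x := by
  simp only [dotProduct, sq]

lemma enorm₂_sq {n : ℕ} (x : Fin n → ℝ) : enorm₂ x ^ 2 = x ⬝ᵥ x := by
  rw [enorm₂, Real.sq_sqrt (Finset.sum_nonneg fun i _ => sq_nonneg (x i)), sum_sq_eq_dotProduct]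

lemma enorm₂_pos {n : ℕ} {x : Fin n → ℝ} (hx : x ≠ 0) : 0 < enorm₂ x := by
  rw [enorm₂, Real.sqrt_pos, sum_sq_eq_dotProduct]
  exact (dotProduct_self_star_nonneg x).lt_of_ne' (dotProduct_self_eq_zero.not.mpr hx)

lemma ncard_support_add_le {ι M : Type*} [Finite ι] [AddZeroClass M] (x y : ι → M) :
    (support (x + y)).ncard ≤ (support x).ncard + (support y).ncard :=
  (Set.ncard_le_ncard (support_add x y)).trans (Set.ncard_union_le _ _)

lemma ncard_support_sub_le {ι G : Type*} [Finite ι] [SubtractionMonoid G] (x y : ι → G) :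
    (support (x - y)).ncard ≤ (support x).ncard + (support y).ncard :=
  (Set.ncard_le_ncard (support_sub x y)).trans (Set.ncard_union_le _ _)

lemma ncard_support_smul_le {ι R M : Type*} [Finite ι] [Zero M] [SMulZeroClass R M] (c : R)
    (x : ι → M) : (support (c • x)).ncard ≤ (support x).ncard :=
  Set.ncard_le_ncard (support_const_smul_subset c x)

lemma RIP.two_mul_dotProduct_mulVec_le {m n s : ℕ} {Θ : Matrix (Fin m) (Fin n) ℝ} {δ : ℝ}
    (hΘ : RIP Θ s δ) {x y : Fin n → ℝ} (hs : (support x).ncard + (support y).ncard ≤ s)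
    (hxy : x ⬝ᵥ y = 0) :
    2 * (Θ *ᵥ x ⬝ᵥ Θ *ᵥ y) ≤ δ * (x ⬝ᵥ x + y ⬝ᵥ y) := by
  have hadd := (hΘ (x + y) ((ncard_support_add_le x y).trans hs)).2
  have hsub := (hΘ (x - y) ((ncard_support_sub_le x y).trans hs)).1
  simp only [sum_sq_eq_dotProduct, mulVec_add, mulVec_sub, add_dotProduct, dotProduct_add,
    sub_dotProduct, dotProduct_sub, dotProduct_comm y x, dotProduct_comm (Θ *ᵥ y), hxy]
    at hadd hsub
  linarith

lemma dotProduct_eq_zero_of_disjoint {ι R : Type*} [Fintype ι] [NonUnitalNonAssocSemiring R]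
    {u v : ι → R} (hdisj : ∀ i, u i = 0 ∨ v i = 0) : u ⬝ᵥ v = 0 :=
  Finset.sum_eq_zero fun i _ => by rcases hdisj i with h | h <;> simp [h]

theorem stmt7_general {m n k : ℕ} (Θ : Matrix (Fin m) (Fin n) ℝ) (δ : ℝ)
    (hRIP : RIP Θ (2 * k) δ)
    (u v : Fin n → ℝ)
    (hu : Set.ncard {i | u i ≠ 0} ≤ k) (hv : Set.ncard {i | v i ≠ 0} ≤ k)
    (hdisj : ∀ i, u i = 0 ∨ v i = 0) :
    |∑ i, (Θ.mulVec u) i * (Θ.mulVec v) i| ≤ δ * enorm₂ u * enorm₂ v := by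
  rcases eq_or_ne u 0 with rfl | hu0
  · simp [enorm₂]
  rcases eq_or_ne v 0 with rfl | hv0
  · simp [enorm₂]
  change |Θ *ᵥ u ⬝ᵥ Θ *ᵥ v| ≤ _
  set a := enorm₂ u
  set b := enorm₂ v
  have hab : 0 < a * b := mul_pos (enorm₂_pos hu0) (enorm₂_pos hv0)
  have hpolar (c : ℝ) :
      2 * (b * c) * (Θ *ᵥ u ⬝ᵥ Θ *ᵥ v) ≤ δ * (b ^ 2 * a ^ 2 + c ^ 2 * b ^ 2) := by
    have h := hRIP.two_mul_dotProduct_mulVec_le (x := b • u) (y := c • v)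
      (by linarith [(ncard_support_smul_le b u).trans hu, (ncard_support_smul_le c v).trans hv])
      (by simp [dotProduct_eq_zero_of_disjoint hdisj])
    simp only [mulVec_smul, smul_dotProduct, dotProduct_smul, smul_eq_mul, ← enorm₂_sq] at h
    linarith
  rw [abs_le]
  constructor <;> nlinarith [hpolar a, hpolar (-a)]

theorem stmt7 {m n k k₁ k₂ : ℕ} (Θ : Matrix (Fin m) (Fin n) ℝ) (δ : ℝ)
    (hRIP : RIP Θ (2 * k) δ)
    (hk₁ : 0 < k₁) (hk₂ : 0 < k₂) (hk₁k : k₁ ≤ k) (hk₂k : k₂ ≤ k)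
    (h2k : 2 * k ≤ k₁ + k₂)
    (u v : Fin n → ℝ)
    (hu : Set.ncard {i | u i ≠ 0} ≤ k) (hv : Set.ncard {i | v i ≠ 0} ≤ k)
    (hdisj : ∀ i, u i = 0 ∨ v i = 0) :
    |∑ i, (Θ.mulVec u) i * (Θ.mulVec v) i| ≤ δ * enorm₂ u * enorm₂ v :=
  stmt7_general Θ δ hRIP u v hu hv hdisj
end

section
/- Suppose Θ is an m×n matrix satisfying RIP of order 2k with constant δ₂ₖ < √2 − 1, measurements z = Θ·s + e with ‖e‖₂ ≤ ε, and ŝ is any minimizer of ‖s'‖₁ subject to ‖z − Θs'‖₂ ≤ ε. Then ‖ŝ − s‖₂ ≤ c₁·ε + (c₂/√k)·‖s − s_k‖₁, where s_k is a best k-sparse approximation of s, c₁ = 4√(1+δ₂ₖ)/(1−(1+√2)δ₂ₖ) and c₂ = 2(1−(1−√2)δ₂ₖ)/(1−(1+√2)δ₂ₖ). -/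
open Matrix

/-- Euclidean norm. -/
noncomputable def eucNorm {m : ℕ} (v : Fin m → ℝ) : ℝ := Real.sqrt (∑ i, v i ^ 2)

/-- ℓ₁ norm. -/
def l1norm {m : ℕ} (v : Fin m → ℝ) : ℝ := ∑ i, |v i|

/-!
Write `h = ŝ - s` and let `T₀` be the support of `s_k`. Minimality of `‖ŝ‖₁` puts `h` in the cone
`‖h_{T₀ᶜ}‖₁ ≤ ‖h_{T₀}‖₁ + 2‖s - s_k‖₁`, and feasibility of both `ŝ` and `s` gives
`‖Θh‖₂ ≤ 2ε`. Split `T₀ᶜ` into blocks `T₁, T₂, …` of size `k` in order of decreasing `|h i|`; each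
block is dominated entrywise by the average of the previous one, so `∑_{j ≥ 2} ‖h_{T_j}‖₂` is at
most `‖h_{T₀ᶜ}‖₁ / √k`, hence at most `‖h_{T₀ ∪ T₁}‖₂ + 2‖s - s_k‖₁ / √k` by the cone condition.
On the other hand the RIP makes `Θ` nearly isometric on `h_{T₀ ∪ T₁}` and nearly orthogonal
between it and every `h_{T_j}`, which bounds `‖h_{T₀ ∪ T₁}‖₂`; the condition
`δ < √2 - 1` is exactly what lets this bound absorb the `√2 δ ‖h_{T₀ ∪ T₁}‖₂` coming from the tail.
-/

open Finset Function

lemma ncard_support_le_card {α M : Type*} [Zero M] {f : α → M} {T : Finset α}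
    (h : support f ⊆ T) : (support f).ncard ≤ T.card :=
  (Set.ncard_le_ncard h T.finite_toSet).trans_eq (Set.ncard_coe_finset T)

section EuclideanNorm

variable {m : ℕ}

lemma eucNorm_eq_norm (v : Fin m → ℝ) : eucNorm v = ‖WithLp.toLp 2 v‖ := by
  simp [eucNorm, EuclideanSpace.norm_eq]

lemma eucNorm_nonneg (v : Fin m → ℝ) : 0 ≤ eucNorm v := Real.sqrt_nonneg _

lemma sq_eucNorm (v : Fin m → ℝ) : eucNorm v ^ 2 = ∑ i, v i ^ 2 :=
  Real.sq_sqrt (by positivity)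

lemma dotProduct_self_eq_sq_eucNorm (v : Fin m → ℝ) : v ⬝ᵥ v = eucNorm v ^ 2 := by
  rw [sq_eucNorm]; simp only [dotProduct, sq]

@[simp]
lemma eucNorm_zero : eucNorm (0 : Fin m → ℝ) = 0 := by
  simp [eucNorm]

lemma eucNorm_eq_zero {v : Fin m → ℝ} : eucNorm v = 0 ↔ v = 0 := by
  simp [eucNorm_eq_norm]

lemma eucNorm_smul (c : ℝ) (v : Fin m → ℝ) : eucNorm (c • v) = |c| * eucNorm v := by
  simp [eucNorm_eq_norm, WithLp.toLp_smul, norm_smul]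

lemma eucNorm_neg (v : Fin m → ℝ) : eucNorm (-v) = eucNorm v := by
  simp [eucNorm_eq_norm, WithLp.toLp_neg]

lemma eucNorm_add_le (u v : Fin m → ℝ) : eucNorm (u + v) ≤ eucNorm u + eucNorm v := by
  simpa only [eucNorm_eq_norm, WithLp.toLp_add] using norm_add_le _ _

lemma eucNorm_sub_le (u v : Fin m → ℝ) : eucNorm (u - v) ≤ eucNorm u + eucNorm v := by
  simpa only [eucNorm_eq_norm, WithLp.toLp_sub] using norm_sub_le _ _

lemma eucNorm_sum_le {ι : Type*} (s : Finset ι) (f : ι → Fin m → ℝ) :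
    eucNorm (∑ j ∈ s, f j) ≤ ∑ j ∈ s, eucNorm (f j) := by
  simpa only [eucNorm_eq_norm, WithLp.toLp_sum] using norm_sum_le _ _

lemma dotProduct_le_eucNorm_mul (u v : Fin m → ℝ) : u ⬝ᵥ v ≤ eucNorm u * eucNorm v := by
  simpa [eucNorm_eq_norm, EuclideanSpace.inner_toLp_toLp, dotProduct_comm] using
    real_inner_le_norm (WithLp.toLp 2 u) (WithLp.toLp 2 v)

lemma dotProduct_eq_zero_of_disjoint_s11 {u v : Fin m → ℝ} (h : Disjoint (support u) (support v)) :
    u ⬝ᵥ v = 0 :=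
  sum_eq_zero fun i _ => by
    by_cases hu : u i = 0
    · simp [hu]
    · simp [notMem_support.1 (h.notMem_of_mem_left (mem_support.2 hu))]

lemma sq_eucNorm_add_of_disjoint {u v : Fin m → ℝ} (h : Disjoint (support u) (support v)) :
    eucNorm (u + v) ^ 2 = eucNorm u ^ 2 + eucNorm v ^ 2 := by
  simp only [← dotProduct_self_eq_sq_eucNorm, add_dotProduct, dotProduct_add,
    dotProduct_eq_zero_of_disjoint_s11 h, dotProduct_eq_zero_of_disjoint_s11 h.symm]
  ring

lemma eucNorm_le_eucNorm_add_of_disjoint {u v : Fin m → ℝ} (h : Disjoint (support u) (support v)) :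
    eucNorm u ≤ eucNorm (u + v) := by
  rw [← pow_le_pow_iff_left₀ (eucNorm_nonneg _) (eucNorm_nonneg _) two_ne_zero,
    sq_eucNorm_add_of_disjoint h]
  nlinarith

lemma sq_eucNorm_add_sub_sq_eucNorm_sub (u v : Fin m → ℝ) :
    eucNorm (u + v) ^ 2 - eucNorm (u - v) ^ 2 = 4 * (u ⬝ᵥ v) := by
  simp only [← dotProduct_self_eq_sq_eucNorm, add_dotProduct, dotProduct_add, sub_dotProduct,
    dotProduct_sub, dotProduct_comm v u]
  ring

lemma sq_eucNorm_indicator (T : Finset (Fin m)) (v : Fin m → ℝ) :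
    eucNorm ((T : Set (Fin m)).indicator v) ^ 2 = ∑ i ∈ T, v i ^ 2 := by
  rw [sq_eucNorm, ← sum_indicator_subset _ (subset_univ T)]
  congr 1 with i
  by_cases hi : i ∈ T <;> simp [hi]

lemma sum_abs_le_sqrt_card_mul_eucNorm_indicator (T : Finset (Fin m)) (v : Fin m → ℝ) :
    ∑ i ∈ T, |v i| ≤ √T.card * eucNorm ((T : Set (Fin m)).indicator v) := by
  rw [← Real.sqrt_sq (eucNorm_nonneg _), ← Real.sqrt_mul (by positivity), sq_eucNorm_indicator]
  refine Real.le_sqrt_of_sq_le ?_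
  simpa only [sq_abs] using sq_sum_le_card_mul_sum_sq (s := T) (f := fun i => |v i|)

end EuclideanNorm

lemma sum_compl_abs_le_of_l1norm_add_le {n : ℕ} {s h : Fin n → ℝ} (T : Finset (Fin n))
    (hmin : l1norm (s + h) ≤ l1norm s) :
    ∑ i ∈ Tᶜ, |h i| ≤ ∑ i ∈ T, |h i| + 2 * ∑ i ∈ Tᶜ, |s i| := by
  have hT : ∑ i ∈ T, (|s i| - |h i|) ≤ ∑ i ∈ T, |s i + h i| :=
    sum_le_sum fun i _ => by simpa using abs_sub_abs_le_abs_sub (s i) (-h i)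
  have hTc : ∑ i ∈ Tᶜ, (|h i| - |s i|) ≤ ∑ i ∈ Tᶜ, |s i + h i| :=
    sum_le_sum fun i _ => by simpa [add_comm] using abs_sub_abs_le_abs_sub (h i) (-s i)
  unfold l1norm at hmin
  rw [← sum_add_sum_compl T, ← sum_add_sum_compl T (fun i => |s i|)] at hmin
  simp only [sum_sub_distrib, Pi.add_apply] at hT hTc hmin
  linarith

lemma sum_compl_abs_sub_le_of_l1norm_le {n : ℕ} {s ŝ u : Fin n → ℝ} {T : Finset (Fin n)}
    (hu : support u ⊆ T) (hmin : l1norm ŝ ≤ l1norm s) :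
    ∑ i ∈ Tᶜ, |(ŝ - s) i| ≤ ∑ i ∈ T, |(ŝ - s) i| + 2 * l1norm (s - u) := by
  have htail : ∑ i ∈ Tᶜ, |s i| ≤ l1norm (s - u) :=
    calc ∑ i ∈ Tᶜ, |s i| = ∑ i ∈ Tᶜ, |(s - u) i| :=
          sum_congr rfl fun i hi => by
            simp [notMem_support.1 fun h => mem_compl.1 hi (by exact_mod_cast hu h)]
      _ ≤ l1norm (s - u) := sum_le_univ_sum_of_nonneg fun i => abs_nonneg _
  have := sum_compl_abs_le_of_l1norm_add_le (h := ŝ - s) T (by rwa [add_sub_cancel])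
  linarith

lemma Finset.exists_top_subset_card_eq {α β : Type*} [DecidableEq α] [LinearOrder β]
    (f : α → β) (S : Finset α) {k : ℕ} (hk : k ≤ S.card) :
    ∃ A ⊆ S, A.card = k ∧ ∀ a ∈ A, ∀ b ∈ S \ A, f b ≤ f a := by
  induction k generalizing S with
  | zero => exact ⟨∅, empty_subset S, rfl, by simp⟩
  | succ k ih =>
    obtain ⟨a, haS, ha⟩ := S.exists_max_image f (card_pos.1 (by omega))
    obtain ⟨A, hAS, hA, hAdom⟩ := ih (S.erase a) (by rw [card_erase_of_mem haS]; omega)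
    have haA : a ∉ A := fun h => by simpa using hAS h
    refine ⟨insert a A, insert_subset haS (hAS.trans (erase_subset a S)),
      by rw [card_insert_of_notMem haA, hA], ?_⟩
    intro x hx b hb
    simp only [mem_sdiff, mem_insert, not_or] at hb
    rcases mem_insert.1 hx with rfl | hx
    · exact ha b hb.1
    · exact hAdom x hx b (by simp [hb.1, hb.2.1, hb.2.2])

lemma eucNorm_indicator_le_of_forall_abs_le {n : ℕ} {v : Fin n → ℝ} {A B : Finset (Fin n)}
    (hBA : B.card ≤ A.card) (hdom : ∀ a ∈ A, ∀ b ∈ B, |v b| ≤ |v a|) :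
    eucNorm ((B : Set (Fin n)).indicator v) ≤ (∑ i ∈ A, |v i|) / √A.card := by
  rcases (Nat.zero_le A.card).eq_or_lt with hA | hA
  · obtain rfl : B = ∅ := card_eq_zero.1 (by omega)
    simp [← hA, eucNorm]
  set M := ∑ i ∈ A, |v i|
  have hc : (0 : ℝ) < A.card := by exact_mod_cast hA
  have hb : ∀ b ∈ B, |v b| ≤ M / A.card := fun b hb => by
    rw [le_div_iff₀ hc, mul_comm, ← nsmul_eq_mul]
    exact card_nsmul_le_sum A _ _ fun a ha => hdom a ha b hb
  rw [← Real.sqrt_sq (eucNorm_nonneg _), Real.sqrt_le_left (by positivity), sq_eucNorm_indicator]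
  calc ∑ i ∈ B, v i ^ 2 ≤ ∑ _i ∈ B, (M / A.card) ^ 2 :=
        sum_le_sum fun i hi => by
          rw [← sq_abs]; exact pow_le_pow_left₀ (abs_nonneg _) (hb i hi) 2
    _ = B.card * (M / A.card) ^ 2 := by rw [sum_const, nsmul_eq_mul]
    _ ≤ A.card * (M / A.card) ^ 2 := by gcongr
    _ = (M / √A.card) ^ 2 := by
        rw [div_pow, div_pow, Real.sq_sqrt hc.le]; field_simp

lemma sum_compl_abs_div_sqrt_le_of_cone {n k : ℕ} (hk : 0 < k) {h : Fin n → ℝ}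
    {T₀ : Finset (Fin n)} (hT₀ : T₀.card ≤ k) {σ : ℝ}
    (hcone : ∑ i ∈ T₀ᶜ, |h i| ≤ ∑ i ∈ T₀, |h i| + σ) :
    (∑ i ∈ T₀ᶜ, |h i|) / √k ≤ eucNorm ((T₀ : Set (Fin n)).indicator h) + σ / √k := by
  have hk' : 0 < √k := Real.sqrt_pos.2 (by exact_mod_cast hk)
  have hhead : ∑ i ∈ T₀, |h i| ≤ √k * eucNorm ((T₀ : Set (Fin n)).indicator h) :=
    (sum_abs_le_sqrt_card_mul_eucNorm_indicator T₀ h).trans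
      (mul_le_mul_of_nonneg_right (Real.sqrt_le_sqrt (by exact_mod_cast hT₀)) (eucNorm_nonneg _))
  rw [div_le_iff₀ hk', add_mul, div_mul_cancel₀ _ hk'.ne']
  linarith

/-- `T₁` is the first block of `k` largest entries of `v` on `S`; the later blocks `v_{T_j}`,
`j ≥ 2`, are recorded as the vectors `w`. -/
lemma exists_tail_decomposition {n k : ℕ} (hk : 0 < k) (v : Fin n → ℝ) (S : Finset (Fin n)) :
    ∃ T₁ ⊆ S, T₁.card ≤ k ∧ ∃ (r : ℕ) (w : Fin r → Fin n → ℝ),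
      (∀ j, support (w j) ⊆ ↑(S \ T₁) ∧ (support (w j)).ncard ≤ k) ∧
      ∑ j, w j = (↑(S \ T₁) : Set (Fin n)).indicator v ∧
      ∑ j, eucNorm (w j) ≤ (∑ i ∈ S, |v i|) / √k := by
  induction S using Finset.strongInduction with
  | H S ih =>
  by_cases hS : S.card ≤ k
  · refine ⟨S, subset_rfl, hS, 0, Fin.elim0, fun j => j.elim0, ?_, ?_⟩
    · simp [Pi.zero_def]
    · simp only [univ_eq_empty, sum_empty]; positivity
  obtain ⟨A, hAS, hA, hAdom⟩ := S.exists_top_subset_card_eq (|v ·|) (k := k) (by omega)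
  obtain ⟨T, hTS, hT, r, w, hw, hsum, hnorm⟩ :=
    ih (S \ A) (sdiff_ssubset hAS (card_pos.1 (by omega)))
  refine ⟨A, hAS, hA.le, r + 1, Fin.cons ((↑T : Set (Fin n)).indicator v) w, ?_, ?_, ?_⟩
  · refine Fin.cases ⟨?_, ?_⟩ fun j => ?_
    · exact (Set.support_indicator_subset).trans (by exact_mod_cast hTS)
    · exact (ncard_support_le_card Set.support_indicator_subset).trans hT
    · rw [Fin.cons_succ]
      exact ⟨(hw j).1.trans (coe_subset.2 sdiff_subset), (hw j).2⟩
  · rw [Fin.sum_cons, hsum, coe_sdiff _ T, Set.indicator_sdiff (by exact_mod_cast hTS)]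
    abel
  · have hT : eucNorm ((↑T : Set (Fin n)).indicator v) ≤ (∑ i ∈ A, |v i|) / √k := by
      rw [← hA]
      exact eucNorm_indicator_le_of_forall_abs_le (by omega)
        fun a ha b hb => hAdom a ha b (hTS hb)
    rw [Fin.sum_univ_succ, Fin.cons_zero]
    simp only [Fin.cons_succ]
    rw [← sum_sdiff hAS, add_div, add_comm (_ / _)]
    exact add_le_add hT hnorm

namespace RIP

variable {m n s k : ℕ} {Θ : Matrix (Fin m) (Fin n) ℝ} {δ : ℝ}

lemma sq_eucNorm_mulVec (hΘ : RIP Θ s δ) {x : Fin n → ℝ} (hx : (support x).ncard ≤ s) :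
    (1 - δ) * eucNorm x ^ 2 ≤ eucNorm (Θ *ᵥ x) ^ 2 ∧
      eucNorm (Θ *ᵥ x) ^ 2 ≤ (1 + δ) * eucNorm x ^ 2 := by
  simpa only [sq_eucNorm] using hΘ x hx

lemma nonneg (hΘ : RIP Θ s δ) (hs : 0 < s) (i : Fin n) : 0 ≤ δ := by
  have hx : (support (Pi.single i 1 : Fin n → ℝ)).ncard ≤ s := by
    rw [Pi.support_single_of_ne one_ne_zero, Set.ncard_singleton]; exact hs
  have hpos : 0 < eucNorm (Pi.single i 1 : Fin n → ℝ) ^ 2 := by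
    have : (Pi.single i 1 : Fin n → ℝ) ≠ 0 := by simp
    exact pow_pos ((eucNorm_nonneg _).lt_of_ne' (mt eucNorm_eq_zero.1 this)) 2
  obtain ⟨hlo, hup⟩ := hΘ.sq_eucNorm_mulVec hx
  nlinarith

/-- Near-orthogonality: by polarization, the RIP bounds on `x' ± y'` for the rescaled vectors
`x' = ‖y‖ • x`, `y' = ‖x‖ • y` (of equal norm) control `⟨Θx', Θy'⟩`. -/
lemma dotProduct_mulVec_le (hΘ : RIP Θ s δ) {x y : Fin n → ℝ}
    (hxy : Disjoint (support x) (support y)) (hs : (support x).ncard + (support y).ncard ≤ s) :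
    (Θ *ᵥ x) ⬝ᵥ (Θ *ᵥ y) ≤ δ * eucNorm x * eucNorm y := by
  set a := eucNorm x
  set b := eucNorm y
  have hsupp : ∀ c d : ℝ, (support (c • x + d • y)).ncard ≤ s := fun c d =>
    (Set.ncard_le_ncard ((support_add _ _).trans (Set.union_subset_union
      (support_smul_subset_right _ _) (support_smul_subset_right _ _)))).trans
      ((Set.ncard_union_le _ _).trans hs)
  have hdisj : ∀ c d : ℝ, Disjoint (support (c • x)) (support (d • y)) := fun c d =>
    hxy.mono (support_smul_subset_right _ _) (support_smul_subset_right _ _)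
  have hnorm : ∀ d : ℝ, |d| = a → eucNorm (b • x + d • y) ^ 2 = 2 * (a * b) ^ 2 := fun d hd => by
    rw [sq_eucNorm_add_of_disjoint (hdisj _ _), eucNorm_smul, eucNorm_smul, hd,
      abs_of_nonneg (eucNorm_nonneg y)]
    ring
  obtain ⟨-, hup⟩ := hΘ.sq_eucNorm_mulVec (hsupp b a)
  obtain ⟨hlo, -⟩ := hΘ.sq_eucNorm_mulVec (hsupp b (-a))
  rw [hnorm a (abs_of_nonneg (eucNorm_nonneg x))] at hup
  rw [hnorm (-a) (by rw [abs_neg, abs_of_nonneg (eucNorm_nonneg x)]), neg_smul,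
    ← sub_eq_add_neg] at hlo
  have hpol := sq_eucNorm_add_sub_sq_eucNorm_sub (Θ *ᵥ (b • x)) (Θ *ᵥ (a • y))
  rw [← Matrix.mulVec_add, ← Matrix.mulVec_sub, Matrix.mulVec_smul, Matrix.mulVec_smul,
    smul_dotProduct, dotProduct_smul, smul_eq_mul, smul_eq_mul] at hpol
  have hab : a * b * ((Θ *ᵥ x) ⬝ᵥ (Θ *ᵥ y)) ≤ a * b * (δ * a * b) := by nlinarith
  rcases (mul_nonneg (eucNorm_nonneg x) (eucNorm_nonneg y)).eq_or_lt with hab0 | hab0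
  · obtain rfl | rfl : x = 0 ∨ y = 0 := by
      simpa only [mul_eq_zero, eucNorm_eq_zero] using hab0.symm
    all_goals simp [a, b]
  · exact le_of_mul_le_mul_left hab hab0

lemma neg_dotProduct_mulVec_add_le (hΘ : RIP Θ (2 * k) δ) (hδ : 0 ≤ δ) {x₀ x₁ y : Fin n → ℝ}
    (h₀₁ : Disjoint (support x₀) (support x₁)) (h₀ : Disjoint (support x₀) (support y))
    (h₁ : Disjoint (support x₁) (support y)) (hx₀ : (support x₀).ncard ≤ k)
    (hx₁ : (support x₁).ncard ≤ k) (hy : (support y).ncard ≤ k) :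
    -((Θ *ᵥ (x₀ + x₁)) ⬝ᵥ (Θ *ᵥ y)) ≤ √2 * δ * eucNorm (x₀ + x₁) * eucNorm y := by
  have e₀ := hΘ.dotProduct_mulVec_le (x := -x₀) (y := y) (by rwa [support_neg])
    (by rw [support_neg]; omega)
  have e₁ := hΘ.dotProduct_mulVec_le (x := -x₁) (y := y) (by rwa [support_neg])
    (by rw [support_neg]; omega)
  rw [Matrix.mulVec_neg, neg_dotProduct, eucNorm_neg] at e₀ e₁
  have hsum : eucNorm x₀ + eucNorm x₁ ≤ √2 * eucNorm (x₀ + x₁) := by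
    rw [← Real.sqrt_sq (eucNorm_nonneg (x₀ + x₁)), ← Real.sqrt_mul zero_le_two,
      sq_eucNorm_add_of_disjoint h₀₁]
    exact Real.le_sqrt_of_sq_le add_sq_le
  have := mul_le_mul_of_nonneg_left hsum (mul_nonneg hδ (eucNorm_nonneg y))
  rw [Matrix.mulVec_add, add_dotProduct]
  linarith

/-- The RIP lower bound on the head `x₀ + x₁` of `h = x₀ + x₁ + ∑ j, w j`, after expanding
`‖Θ(x₀ + x₁)‖²` as `⟨Θ(x₀ + x₁), Θh⟩` minus near-orthogonal cross terms with the blocks `w j`. -/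
lemma one_sub_mul_eucNorm_le (hΘ : RIP Θ (2 * k) δ) (hδ : 0 ≤ δ) {x₀ x₁ : Fin n → ℝ} {r : ℕ}
    {w : Fin r → Fin n → ℝ} (h₀₁ : Disjoint (support x₀) (support x₁))
    (h₀ : ∀ j, Disjoint (support x₀) (support (w j)))
    (h₁ : ∀ j, Disjoint (support x₁) (support (w j))) (hx₀ : (support x₀).ncard ≤ k)
    (hx₁ : (support x₁).ncard ≤ k) (hw : ∀ j, (support (w j)).ncard ≤ k) :
    (1 - δ) * eucNorm (x₀ + x₁) ≤
      √(1 + δ) * eucNorm (Θ *ᵥ (x₀ + x₁ + ∑ j, w j)) + √2 * δ * ∑ j, eucNorm (w j) := by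
  set x := x₀ + x₁
  set η := eucNorm (Θ *ᵥ (x + ∑ j, w j))
  set ρ := ∑ j, eucNorm (w j)
  have hx : (support x).ncard ≤ 2 * k :=
    (Set.ncard_le_ncard (support_add _ _)).trans ((Set.ncard_union_le _ _).trans (by omega))
  obtain ⟨hlo, hup⟩ := hΘ.sq_eucNorm_mulVec hx
  have hΘx : eucNorm (Θ *ᵥ x) ≤ √(1 + δ) * eucNorm x := by
    rw [← Real.sqrt_sq (eucNorm_nonneg x), ← Real.sqrt_mul (by linarith)]
    exact Real.le_sqrt_of_sq_le hup
  have hsplit : eucNorm (Θ *ᵥ x) ^ 2 =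
      (Θ *ᵥ x) ⬝ᵥ (Θ *ᵥ (x + ∑ j, w j)) - ∑ j, (Θ *ᵥ x) ⬝ᵥ (Θ *ᵥ w j) := by
    rw [Matrix.mulVec_add Θ x, Matrix.mulVec_sum, dotProduct_add, dotProduct_sum,
      dotProduct_self_eq_sq_eucNorm]
    ring
  have hcross : -∑ j, (Θ *ᵥ x) ⬝ᵥ (Θ *ᵥ w j) ≤ √2 * δ * eucNorm x * ρ := by
    rw [← sum_neg_distrib, mul_sum]
    exact sum_le_sum fun j _ => hΘ.neg_dotProduct_mulVec_add_le hδ h₀₁ (h₀ j) (h₁ j) hx₀ hx₁ (hw j)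
  have hη : 0 ≤ η := eucNorm_nonneg _
  have hρ : 0 ≤ ρ := sum_nonneg fun j _ => eucNorm_nonneg _
  have key : (1 - δ) * eucNorm x * eucNorm x ≤ (√(1 + δ) * η + √2 * δ * ρ) * eucNorm x := by
    have := dotProduct_le_eucNorm_mul (Θ *ᵥ x) (Θ *ᵥ (x + ∑ j, w j))
    nlinarith [mul_le_mul_of_nonneg_right hΘx hη]
  rcases (eucNorm_nonneg x).eq_or_lt with hx0 | hx0
  · rw [← hx0, mul_zero]; positivity
  · exact le_of_mul_le_mul_right key hx0

theorem eucNorm_le_of_cone (hk : 0 < k) (hΘ : RIP Θ (2 * k) δ) (hδ : 0 ≤ δ)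
    (hD : 0 < 1 - (1 + √2) * δ) {h : Fin n → ℝ} {T₀ : Finset (Fin n)} (hT₀ : T₀.card ≤ k)
    {η σ : ℝ} (htube : eucNorm (Θ *ᵥ h) ≤ η) (hcone : ∑ i ∈ T₀ᶜ, |h i| ≤ ∑ i ∈ T₀, |h i| + σ) :
    eucNorm h ≤ 2 * (√(1 + δ) * η + √2 * δ * (σ / √k)) / (1 - (1 + √2) * δ) + σ / √k := by
  obtain ⟨T₁, hT₁, hT₁k, r, w, hw, hwsum, hρ⟩ := exists_tail_decomposition hk h T₀ᶜ
  set x₀ := (↑T₀ : Set (Fin n)).indicator h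
  set x₁ := (↑T₁ : Set (Fin n)).indicator h
  set ρ := ∑ j, eucNorm (w j)
  have hdecomp : h = x₀ + x₁ + ∑ j, w j := by
    rw [hwsum, coe_sdiff, Set.indicator_sdiff (coe_subset.2 hT₁), coe_compl,
      Set.indicator_compl]
    abel
  have hsx₀ : support x₀ ⊆ T₀ := Set.support_indicator_subset
  have hsx₁ : support x₁ ⊆ T₁ := Set.support_indicator_subset
  have h₀₁ : Disjoint (support x₀) (support x₁) :=
    (disjoint_coe.2 (disjoint_of_subset_right hT₁ disjoint_compl_right)).mono hsx₀ hsx₁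
  have h₀ : ∀ j, Disjoint (support x₀) (support (w j)) := fun j =>
    (disjoint_coe.2 (disjoint_of_subset_right sdiff_subset disjoint_compl_right)).mono
      hsx₀ (hw j).1
  have h₁ : ∀ j, Disjoint (support x₁) (support (w j)) := fun j =>
    (disjoint_coe.2 disjoint_sdiff).mono hsx₁ (hw j).1
  have hhead := hΘ.one_sub_mul_eucNorm_le hδ h₀₁ h₀ h₁
    ((ncard_support_le_card hsx₀).trans hT₀) ((ncard_support_le_card hsx₁).trans hT₁k)
    fun j => (hw j).2
  rw [← hdecomp] at hhead
  set a := eucNorm (x₀ + x₁)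
  have hρa : ρ ≤ a + σ / √k := hρ.trans <| (sum_compl_abs_div_sqrt_le_of_cone hk hT₀ hcone).trans
    (add_le_add_left (eucNorm_le_eucNorm_add_of_disjoint h₀₁) _)
  have hh : eucNorm h ≤ a + ρ := by
    have := eucNorm_add_le (x₀ + x₁) (∑ j, w j)
    rw [← hdecomp] at this
    linarith [eucNorm_sum_le univ w]
  have ha : (1 - (1 + √2) * δ) * a ≤ √(1 + δ) * η + √2 * δ * (σ / √k) := by
    nlinarith [mul_le_mul_of_nonneg_left hρa (by positivity : 0 ≤ √2 * δ),
      mul_le_mul_of_nonneg_left htube (Real.sqrt_nonneg (1 + δ))]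
  rw [← le_div_iff₀' hD] at ha
  rw [mul_div_assoc]
  linarith

end RIP

lemma one_sub_one_add_sqrt_two_mul_pos {δ : ℝ} (hδ : δ < √2 - 1) : 0 < 1 - (1 + √2) * δ := by
  nlinarith [Real.sq_sqrt (zero_le_two : (0 : ℝ) ≤ 2), Real.sqrt_nonneg 2]

theorem stmt11_general {m n k : ℕ} (hk : 0 < k)
    (Θ : Matrix (Fin m) (Fin n) ℝ) (δ : ℝ)
    (hRIP : RIP Θ (2 * k) δ) (hδ : δ < Real.sqrt 2 - 1)
    (s : Fin n → ℝ) (e z : Fin m → ℝ) (ε : ℝ)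
    (hz : z = Θ.mulVec s + e) (he : eucNorm e ≤ ε)
    (sk : Fin n → ℝ) (hsk : Set.ncard {i | sk i ≠ 0} ≤ k)
    (shat : Fin n → ℝ)
    (hfeas : eucNorm (z - Θ.mulVec shat) ≤ ε)
    (hmin : ∀ s' : Fin n → ℝ, eucNorm (z - Θ.mulVec s') ≤ ε → l1norm shat ≤ l1norm s') :
    eucNorm (shat - s) ≤
      (4 * Real.sqrt (1 + δ) / (1 - (1 + Real.sqrt 2) * δ)) * ε +
      (2 * (1 - (1 - Real.sqrt 2) * δ) / (1 - (1 + Real.sqrt 2) * δ)) / Real.sqrt k *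
        l1norm (s - sk) := by
  have hD := one_sub_one_add_sqrt_two_mul_pos hδ
  -- For `n = 0` the RIP carries no information on `δ`, whose sign the general bound needs.
  rcases isEmpty_or_nonempty (Fin n) with hn | ⟨⟨i⟩⟩
  · have hε : 0 ≤ ε := (eucNorm_nonneg e).trans he
    simp only [eucNorm, l1norm, univ_eq_empty, sum_empty, Real.sqrt_zero, mul_zero, add_zero]
    positivity
  set T₀ := (Set.toFinite (support sk)).toFinset
  have hT₀ : T₀.card ≤ k := by rwa [← Set.ncard_eq_toFinset_card]
  have hcone := sum_compl_abs_sub_le_of_l1norm_le (ŝ := shat) (T := T₀) (u := sk)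
    (Set.Finite.coe_toFinset _).ge (hmin s (by rwa [hz, add_sub_cancel_left]))
  have htube : eucNorm (Θ *ᵥ (shat - s)) ≤ 2 * ε := by
    rw [show Θ *ᵥ (shat - s) = e - (z - Θ *ᵥ shat) by rw [Matrix.mulVec_sub, hz]; abel]
    linarith [eucNorm_sub_le e (z - Θ *ᵥ shat)]
  calc eucNorm (shat - s)
      ≤ 2 * (√(1 + δ) * (2 * ε) + √2 * δ * (2 * l1norm (s - sk) / √k)) / (1 - (1 + √2) * δ) +
          2 * l1norm (s - sk) / √k :=
        hRIP.eucNorm_le_of_cone hk (hRIP.nonneg (by omega) i) hD hT₀ htube hcone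
    _ = _ := by
      rw [show 1 - (1 - √2) * δ = (1 - (1 + √2) * δ) + 2 * √2 * δ by ring]
      generalize 1 - (1 + √2) * δ = D at hD ⊢
      field_simp
      ring

theorem stmt11 {m n k : ℕ} (hk : 0 < k)
    (Θ : Matrix (Fin m) (Fin n) ℝ) (δ : ℝ)
    (hRIP : RIP Θ (2 * k) δ) (hδ : δ < Real.sqrt 2 - 1)
    (s : Fin n → ℝ) (e z : Fin m → ℝ) (ε : ℝ)
    (hz : z = Θ.mulVec s + e) (he : eucNorm e ≤ ε)
    (sk : Fin n → ℝ) (hsk : Set.ncard {i | sk i ≠ 0} ≤ k)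
    (hbest : ∀ u : Fin n → ℝ, Set.ncard {i | u i ≠ 0} ≤ k →
      l1norm (s - sk) ≤ l1norm (s - u))
    (shat : Fin n → ℝ)
    (hfeas : eucNorm (z - Θ.mulVec shat) ≤ ε)
    (hmin : ∀ s' : Fin n → ℝ, eucNorm (z - Θ.mulVec s') ≤ ε → l1norm shat ≤ l1norm s') :
    eucNorm (shat - s) ≤
      (4 * Real.sqrt (1 + δ) / (1 - (1 + Real.sqrt 2) * δ)) * ε +
      (2 * (1 - (1 - Real.sqrt 2) * δ) / (1 - (1 + Real.sqrt 2) * δ)) / Real.sqrt k *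
        l1norm (s - sk) :=
  stmt11_general hk Θ δ hRIP hδ s e z ε hz he sk hsk shat hfeas hmin
end
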